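/- arXiv:1704.00257 — 6 statements merged into one kernel-verified Lean document; each statement's English description precedes it below -/
import Mathlib

section
/- A solid set A ⊆ L⁰₊ of positive random variables is radially bounded if and only if for every measurable set E with P(E) > 0 there exists λ_E > 0 such that λ_E · 1_E ∉ A. -/
open MeasureTheory Filter

variable {Ω : Type*} [MeasurableSpace Ω]

/-- `A ⊆ L⁰₊` is solid: `X ∈ A` and `0 ≤ Y ≤ X` (a.e.) imply `Y ∈ A`. -/
def Solid (P : Measure Ω) (A : Set (Ω → ℝ)) : Prop :=
  ∀ X ∈ A, ∀ Y : Ω → ℝ, (∀ᵐ ω ∂P, 0 ≤ Y ω ∧ Y ω ≤ X ω) → Y ∈ A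

/-- Radial boundedness for a set of positive random variables: every ray through a
nonzero element eventually leaves the set. -/
def RadiallyBoundedPos (P : Measure Ω) (A : Set (Ω → ℝ)) : Prop :=
  ∀ X ∈ A, P {ω | 0 < X ω} ≠ 0 →
    ∃ Λ > (0 : ℝ), ∀ l : ℝ, Λ < l → (fun ω => l * X ω) ∉ A

/-- Tightness (boundedness in probability) for a set of positive random variables. -/
def TightPos (P : Measure Ω) (A : Set (Ω → ℝ)) : Prop :=
  ∀ ε > (0 : ℝ), ∃ M > (0 : ℝ), ∀ X ∈ A, P {ω | M < X ω} < ENNReal.ofReal ε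

/-- Radial boundedness for a general set of random variables. -/
def RadiallyBounded (P : Measure Ω) (A : Set (Ω → ℝ)) : Prop :=
  ∀ X ∈ A, P {ω | X ω ≠ 0} ≠ 0 →
    ∃ Λ > (0 : ℝ), ∀ l : ℝ, Λ < l → (fun ω => l * X ω) ∉ A

/-- Tightness (boundedness in probability) for a general set of random variables. -/
def Tight (P : Measure Ω) (A : Set (Ω → ℝ)) : Prop :=
  ∀ ε > (0 : ℝ), ∃ M > (0 : ℝ), ∀ X ∈ A, P {ω | M < |X ω|} < ENNReal.ofReal ε

/-- Membership in the closure of `A` for the (metrizable) topology of convergence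
in probability. -/
def InClosure (P : Measure Ω) (A : Set (Ω → ℝ)) (X : Ω → ℝ) : Prop :=
  ∃ Y : ℕ → Ω → ℝ, (∀ n, Y n ∈ A) ∧ TendstoInMeasure P Y atTop X

/-- A solid set `A ⊆ L⁰₊` is radially bounded iff for every measurable set `E` of positive
probability there is `λ_E > 0` with `λ_E · 1_E ∉ A`. -/
theorem stmt0 (P : Measure Ω) [IsProbabilityMeasure P] (A : Set (Ω → ℝ))
    (hL0 : ∀ X ∈ A, AEMeasurable X P) (hpos : ∀ X ∈ A, ∀ᵐ ω ∂P, 0 ≤ X ω)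
    (hsolid : Solid P A) :
    RadiallyBoundedPos P A ↔
      ∀ E : Set Ω, MeasurableSet E → P E ≠ 0 →
        ∃ l > (0 : ℝ), Set.indicator E (fun _ => l) ∉ A := by
  constructor
  · intro hrb E hE hPE
    by_cases hmem : Set.indicator E (fun _ => (1 : ℝ)) ∈ A
    · have hset : {ω | 0 < Set.indicator E (fun _ => (1 : ℝ)) ω} = E := by
        ext ω
        by_cases hω : ω ∈ E <;> simp [Set.indicator, hω]
      obtain ⟨Λ, hΛ, hΛl⟩ := hrb _ hmem (by rw [hset]; exact hPE)
      refine ⟨Λ + 1, by linarith, ?_⟩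
      have hne := hΛl (Λ + 1) (by linarith)
      have heq : Set.indicator E (fun _ => Λ + 1) = fun ω => (Λ + 1) * Set.indicator E (fun _ => (1 : ℝ)) ω := by
        funext ω
        by_cases hω : ω ∈ E <;> simp [Set.indicator, hω]
      rw [heq]
      exact hne
    · exact ⟨1, one_pos, hmem⟩
  · intro h X hXA hX0
    obtain ⟨Xm, hXmMeas, hXeq⟩ := hL0 X hXA
    have hX0m : P {ω | 0 < Xm ω} ≠ 0 := by
      have : {ω | 0 < X ω} =ᵐ[P] {ω | 0 < Xm ω} := by
        filter_upwards [hXeq] with ω hω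
        show (0 < X ω) = (0 < Xm ω)
        rw [hω]
      rwa [← measure_congr this]
    -- find c > 0 with P {c < Xm} ≠ 0
    have hcex : ∃ n : ℕ, P {ω | 1 / (n + 1 : ℝ) < Xm ω} ≠ 0 := by
      by_contra hc
      push_neg at hc
      apply hX0m
      have hsub : {ω | 0 < Xm ω} ⊆ ⋃ n : ℕ, {ω | 1 / (n + 1 : ℝ) < Xm ω} := by
        intro ω hω
        obtain ⟨n, hn⟩ := exists_nat_one_div_lt (show 0 < Xm ω from hω)
        exact Set.mem_iUnion.2 ⟨n, hn⟩
      refine measure_mono_null hsub ?_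
      exact (measure_iUnion_null_iff).2 hc
    obtain ⟨n, hn⟩ := hcex
    set c : ℝ := 1 / (n + 1 : ℝ) with hc
    have hcpos : 0 < c := by positivity
    set E : Set Ω := {ω | c < Xm ω} with hEdef
    have hEmeas : MeasurableSet E := measurableSet_lt measurable_const hXmMeas
    obtain ⟨l₀, hl₀pos, hl₀⟩ := h E hEmeas hn
    refine ⟨l₀ / c, by positivity, ?_⟩
    intro l hl hlA
    apply hl₀
    have hlpos : 0 < l := lt_trans (by positivity) hl
    refine hsolid _ hlA _ ?_
    filter_upwards [hXeq, hpos X hXA] with ω hω hω0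
    by_cases hE : ω ∈ E
    · have hcx : c < X ω := by rw [hω]; exact hE
      constructor
      · simp [Set.indicator, hE, le_of_lt hl₀pos]
      · have : l₀ = (l₀ / c) * c := by field_simp
        have h1 : (l₀ / c) * c < l * c := by
          apply mul_lt_mul_of_pos_right hl hcpos
        have h2 : l * c < l * X ω := mul_lt_mul_of_pos_left hcx hlpos
        rw [Set.indicator_of_mem hE]
        linarith
    · rw [Set.indicator_of_notMem hE]
      exact ⟨le_refl 0, by positivity⟩
end

section
/- If A ⊆ L⁰₊ is convex, solid, and radially bounded, then its closure in the topology of convergence in probability is also radially bounded. -/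
open MeasureTheory Filter

variable {Ω : Type*} [MeasurableSpace Ω]

/-!
Suppose `X` lies in the closure, `P(X > 0) > 0`, and `l X` lies in the closure for arbitrarily
large `l`. Fix `α > 0` with `B = {X > α}` non-null. Approximating `l X` in probability by
elements of `A` and cutting them down by solidity, `A` contains `n · 1_{D_n}` for sets
`D_n` whose defects `P(B \ D_n)` are summable with sum `< P(B)`. Then `E = ⋂ D_n` is
non-null and every `n · 1_E ≤ n · 1_{D_n}` lies in `A`, so the ray through `1_E ∈ A` never
leaves `A`.
-/

open Set ENNReal

variable {P : Measure Ω} {A : Set (Ω → ℝ)}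

lemma Solid.indicator_mem (hsolid : Solid P A) {Y : Ω → ℝ} (hY : Y ∈ A)
    (hY₀ : ∀ᵐ ω ∂P, 0 ≤ Y ω) {D : Set Ω} {b : ℝ} (hb : 0 ≤ b) (hbY : ∀ ω ∈ D, b ≤ Y ω) :
    D.indicator (fun _ => b) ∈ A := by
  refine hsolid Y hY _ ?_
  filter_upwards [hY₀] with ω hω
  by_cases hωD : ω ∈ D
  · simp [hωD, hb, hbY ω hωD]
  · simp [hωD, hω]

lemma InClosure.exists_indicator_mem (hsolid : Solid P A) (hpos : ∀ X ∈ A, ∀ᵐ ω ∂P, 0 ≤ X ω)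
    {Z : Ω → ℝ} (hZ : InClosure P A Z) {B : Set Ω} {b c : ℝ} (hb : 0 ≤ b) (hbc : b < c)
    (hcZ : ∀ ω ∈ B, c ≤ Z ω) {δ : ℝ≥0∞} (hδ : 0 < δ) :
    ∃ D : Set Ω, P (B \ D) < δ ∧ D.indicator (fun _ => b) ∈ A := by
  obtain ⟨Y, hYA, hYZ⟩ := hZ
  have hdefect : ∀ k,
      B \ {ω | b < Y k ω} ⊆ {ω | ENNReal.ofReal (c - b) ≤ edist (Y k ω) (Z ω)} := by
    rintro k ω ⟨hωB, hωY⟩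
    have hω := hcZ ω hωB
    simp only [mem_ofPred_eq, not_lt] at hωY ⊢
    rw [edist_dist, Real.dist_eq, abs_sub_comm]
    exact ENNReal.ofReal_le_ofReal (le_abs.mpr (Or.inl (by linarith)))
  obtain ⟨k, hk⟩ :=
    ((hYZ _ (ENNReal.ofReal_pos.2 (sub_pos.2 hbc))).eventually (gt_mem_nhds hδ)).exists
  refine ⟨B ∩ {ω | b < Y k ω}, ?_,
    hsolid.indicator_mem (hYA k) (hpos _ (hYA k)) hb fun ω hω => hω.2.le⟩
  rw [sdiff_self_inter]
  exact (measure_mono (hdefect k)).trans_lt hk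

lemma Solid.exists_forall_indicator_natCast_mem (hsolid : Solid P A) {B : Set Ω} (hB : P B ≠ 0)
    (h : ∀ (n : ℕ) (δ : ℝ≥0∞), 0 < δ →
      ∃ D : Set Ω, P (B \ D) < δ ∧ D.indicator (fun _ => (n : ℝ)) ∈ A) :
    ∃ E : Set Ω, P E ≠ 0 ∧ ∀ n : ℕ, E.indicator (fun _ => (n : ℝ)) ∈ A := by
  obtain ⟨ε, hε, hεB⟩ := ENNReal.exists_pos_sum_of_countable' hB ℕ
  choose D hBD hDA using fun n => h n (ε n) (hε n)
  refine ⟨⋂ n, D n, fun hE => ?_, fun n => ?_⟩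
  · exact (calc P B ≤ P (B ∩ ⋂ n, D n) + P (B \ ⋂ n, D n) := measure_le_inter_add_sdiff _ _ _
      _ = P (⋃ n, B \ D n) := by
        rw [measure_mono_null inter_subset_right hE, zero_add, sdiff_iInter]
      _ ≤ ∑' n, P (B \ D n) := measure_iUnion_le _
      _ ≤ ∑' n, ε n := ENNReal.tsum_le_tsum fun n => (hBD n).le).not_gt hεB
  · refine hsolid.indicator_mem (hDA n) (ae_of_all _ fun ω => ?_) n.cast_nonneg fun ω hω => ?_
    · exact indicator_nonneg (fun _ _ => n.cast_nonneg) ω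
    · simp [iInter_subset D n hω]

lemma RadiallyBoundedPos.measure_eq_zero_of_forall_indicator_natCast_mem
    (hrb : RadiallyBoundedPos P A) {E : Set Ω}
    (hE : ∀ n : ℕ, E.indicator (fun _ => (n : ℝ)) ∈ A) : P E = 0 := by
  by_contra hE₀
  have hsupport : {ω | 0 < E.indicator (fun _ => ((1 : ℕ) : ℝ)) ω} = E := by
    ext ω
    by_cases hω : ω ∈ E <;> simp [hω]
  obtain ⟨Λ, -, hΛ⟩ := hrb _ (hE 1) (by rwa [hsupport])
  obtain ⟨n, hn⟩ := exists_nat_gt Λ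
  refine hΛ n hn ?_
  convert hE n using 1
  ext ω
  by_cases hω : ω ∈ E <;> simp [hω]

lemma exists_pos_measure_setOf_lt {X : Ω → ℝ} (hX : P {ω | 0 < X ω} ≠ 0) :
    ∃ α > (0 : ℝ), P {ω | α < X ω} ≠ 0 := by
  by_contra! h
  refine hX (measure_mono_null (fun ω (hω : 0 < X ω) => ?_)
    (measure_iUnion_null fun n : ℕ => h (1 / (n + 1)) (by positivity)))
  obtain ⟨n, hn⟩ := exists_nat_one_div_lt hω
  exact mem_iUnion.2 ⟨n, hn⟩

theorem stmt1_general (P : Measure Ω) (A : Set (Ω → ℝ))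
    (hpos : ∀ X ∈ A, ∀ᵐ ω ∂P, 0 ≤ X ω)
    (hsolid : Solid P A) (hrb : RadiallyBoundedPos P A) :
    RadiallyBoundedPos P {X | InClosure P A X} := by
  intro X _ hX
  by_contra! hunbounded
  obtain ⟨α, hα, hB⟩ := exists_pos_measure_setOf_lt hX
  obtain ⟨E, hE, hEA⟩ := hsolid.exists_forall_indicator_natCast_mem hB fun n δ hδ => by
    obtain ⟨l, hl, hlX⟩ := hunbounded ((n + 1) / α) (by positivity)
    refine hlX.exists_indicator_mem hsolid hpos n.cast_nonneg (lt_add_one _) (fun ω hω => ?_) hδ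
    have hω : α < X ω := hω
    rw [div_lt_iff₀ hα] at hl
    nlinarith
  exact hE (hrb.measure_eq_zero_of_forall_indicator_natCast_mem hEA)

/-- If `A ⊆ L⁰₊` is convex, solid and radially bounded, then its closure in probability
is radially bounded. -/
theorem stmt1 (P : Measure Ω) [IsProbabilityMeasure P] (A : Set (Ω → ℝ))
    (hL0 : ∀ X ∈ A, AEMeasurable X P) (hpos : ∀ X ∈ A, ∀ᵐ ω ∂P, 0 ≤ X ω)
    (hconv : Convex ℝ A) (hsolid : Solid P A) (hrb : RadiallyBoundedPos P A) :
    RadiallyBoundedPos P {X | InClosure P A X} :=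
  stmt1_general P A hpos hsolid hrb
end

section
/- A convex solid set A ⊆ L⁰₊ is tight (bounded in probability) if and only if it is radially bounded. -/
open MeasureTheory Filter

variable {Ω : Type*} [MeasurableSpace Ω]

/-!
If `A` is not tight, there are `ε > 0` and, by solidity, measurable sets `F m` with
`P (F m) ≥ ε` and `4 ^ (m + 1) • 𝟙_{F m} ∈ A`. Since `c • 𝟙_{F ∪ G} ≤ ½ (2c • 𝟙_F) + ½ (2c • 𝟙_G)`,
convexity turns `2 ^ (k + 1) c • 𝟙_{F k} ∈ A` for `k ≤ K` into `c • 𝟙_{⋃ k ≤ K, F k} ∈ A`.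
The set `limsup F` has measure `≥ ε`, and an Egorov-type exhaustion of it gives a set `D` of
positive measure covered, for every `N`, by finitely many of the `F (N + k)`. Hence
`2 ^ N • 𝟙_D ∈ A` for every `N`: the ray through `𝟙_D` never leaves `A`.

Conversely, if `P (X > 0) > 0` then `P (X > 1 / (n + 1)) > 0` for some `n`, and tightness
bounds `l` whenever `l • X ∈ A`.
-/
open scoped ENNReal

theorem exists_measure_ne_zero_forall_exists_subset {μ : Measure Ω} {B : Set Ω}
    {C : ℕ → ℕ → Set Ω} (hB : MeasurableSet B) (hB0 : μ B ≠ 0) (hBtop : μ B ≠ ∞)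
    (hC : ∀ N K, MeasurableSet (C N K)) (hCmono : ∀ N, Monotone (C N))
    (hBC : ∀ N, B ⊆ ⋃ K, C N K) :
    ∃ D, μ D ≠ 0 ∧ ∀ N, ∃ K, D ⊆ C N K := by
  obtain ⟨δ, hδ0, hδB⟩ := ENNReal.exists_pos_sum_of_countable' hB0 ℕ
  have hsmall : ∀ N, ∃ K, μ (B \ C N K) < δ N := by
    intro N
    have hlim := tendsto_measure_iInter_atTop (μ := μ)
      (fun K => (hB.diff (hC N K)).nullMeasurableSet)
      (fun K K' h => Set.sdiff_subset_sdiff_right (hCmono N h))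
      ⟨0, ne_top_of_le_ne_top hBtop (measure_mono Set.sdiff_subset)⟩
    rw [← Set.sdiff_iUnion, Set.sdiff_eq_empty.2 (hBC N), measure_empty] at hlim
    exact (hlim.eventually_lt_const (hδ0 N)).exists
  choose K hK using hsmall
  set E := ⋃ N, B \ C N (K N)
  refine ⟨B \ E, fun hBE => ?_, fun N => ⟨K N, fun ω hω => ?_⟩⟩
  · have : μ B < μ B := calc
      μ B ≤ μ (B ∩ E) + μ (B \ E) := measure_le_inter_add_sdiff μ B E
      _ ≤ ∑' N, μ (B \ C N (K N)) := by
        rw [hBE, add_zero]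
        exact (measure_mono Set.inter_subset_right).trans (measure_iUnion_le _)
      _ ≤ ∑' N, δ N := ENNReal.tsum_le_tsum fun N => (hK N).le
      _ < μ B := hδB
    exact this.false
  · by_contra h
    exact hω.2 (Set.mem_iUnion.2 ⟨N, hω.1, h⟩)

theorem exists_measure_ne_zero_forall_exists_subset_biUnion {μ : Measure Ω} [IsFiniteMeasure μ]
    {F : ℕ → Set Ω} (hF : ∀ m, MeasurableSet (F m)) {ε : ℝ≥0∞} (hε : ε ≠ 0)
    (hεF : ∀ m, ε ≤ μ (F m)) :
    ∃ D, μ D ≠ 0 ∧ ∀ N, ∃ K, D ⊆ ⋃ k ≤ K, F (N + k) := by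
  set U : ℕ → Set Ω := fun N => ⋃ k, F (N + k)
  have hU : ∀ N, MeasurableSet (U N) := fun N => .iUnion fun k => hF _
  have hUanti : Antitone U := fun N N' h ω hω => by
    obtain ⟨k, hk⟩ := Set.mem_iUnion.1 hω
    exact Set.mem_iUnion.2 ⟨N' - N + k, by rwa [← add_assoc, Nat.add_sub_cancel' h]⟩
  have hεU : ε ≤ μ (⋂ N, U N) := by
    rw [hUanti.measure_iInter (fun N => (hU N).nullMeasurableSet) ⟨0, measure_ne_top _ _⟩]
    exact le_iInf fun N => (hεF N).trans (measure_mono (Set.subset_iUnion_of_subset 0 subset_rfl))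
  refine exists_measure_ne_zero_forall_exists_subset (.iInter hU)
    (ne_bot_of_le_ne_bot hε hεU) (measure_ne_top _ _)
    (fun N K => .biUnion (Set.to_countable _) fun k _ => hF _)
    (fun N K K' h => Set.biUnion_mono (fun k hk => le_trans hk h) fun _ _ => subset_rfl)
    fun N ω hω => ?_
  obtain ⟨k, hk⟩ := Set.mem_iUnion.1 (Set.mem_iInter.1 hω N)
  exact Set.mem_iUnion.2 ⟨k, Set.mem_iUnion₂.2 ⟨k, le_rfl, hk⟩⟩

section SolidConvex

variable {P : Measure Ω} {A : Set (Ω → ℝ)}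

theorem Solid.indicator_const_mem_of_subset_of_le (hA : Solid P A) {F G : Set Ω} {c c' : ℝ}
    (hFG : F ⊆ G) (hc : 0 ≤ c) (hcc' : c ≤ c') (hG : G.indicator (fun _ => c') ∈ A) :
    F.indicator (fun _ => c) ∈ A := by
  refine hA _ hG _ (.of_forall fun ω => ⟨Set.indicator_nonneg (fun _ _ => hc) ω, ?_⟩)
  by_cases hω : ω ∈ F
  · simp [hω, hFG hω, hcc']
  · simp only [Set.indicator_of_notMem hω]
    exact Set.indicator_nonneg (fun _ _ => hc.trans hcc') ω

theorem Solid.exists_measurableSet_indicator_const_mem (hA : Solid P A) {X : Ω → ℝ}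
    (hX : X ∈ A) (hXm : AEMeasurable X P) (hX0 : ∀ᵐ ω ∂P, 0 ≤ X ω) {M : ℝ} (hM : 0 ≤ M) :
    ∃ F, MeasurableSet F ∧ P F = P {ω | M < X ω} ∧ F.indicator (fun _ => M) ∈ A := by
  refine ⟨{ω | M < hXm.mk X ω}, measurableSet_lt measurable_const hXm.measurable_mk,
    measure_congr ?_, hA _ hX _ ?_⟩
  · filter_upwards [hXm.ae_eq_mk] with ω hω
    change (M < _) = (M < _)
    rw [hω]
  · filter_upwards [hXm.ae_eq_mk, hX0] with ω hω hω0
    by_cases h : M < hXm.mk X ω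
    · simp [h, hM, hω ▸ h |>.le]
    · simp [h, hω0]

theorem Convex.union_indicator_const_mem (hconv : Convex ℝ A) (hA : Solid P A) {F G : Set Ω}
    {c : ℝ} (hc : 0 ≤ c) (hF : F.indicator (fun _ => 2 * c) ∈ A)
    (hG : G.indicator (fun _ => 2 * c) ∈ A) : (F ∪ G).indicator (fun _ => c) ∈ A := by
  refine hA _ (hconv hF hG (by norm_num : (0 : ℝ) ≤ 1 / 2) (by norm_num : (0 : ℝ) ≤ 1 / 2)
    (by norm_num)) _ (.of_forall fun ω => ?_)
  by_cases hωF : ω ∈ F <;> by_cases hωG : ω ∈ G <;> simp [hωF, hωG, hc]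

theorem Convex.biUnion_indicator_const_mem (hconv : Convex ℝ A) (hA : Solid P A) (K : ℕ) :
    ∀ {F : ℕ → Set Ω} {c : ℝ}, 0 ≤ c →
      (∀ k ≤ K, (F k).indicator (fun _ => 2 ^ (k + 1) * c) ∈ A) →
      (⋃ k ≤ K, F k).indicator (fun _ => c) ∈ A := by
  induction K with
  | zero =>
    intro F c hc hF
    exact hA.indicator_const_mem_of_subset_of_le (by simp) hc (by norm_num; linarith)
      (hF 0 le_rfl)
  | succ K ih =>
    intro F c hc hF
    have htail : (⋃ k ≤ K, F (k + 1)).indicator (fun _ => 2 * c) ∈ A :=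
      ih (by positivity) fun k hk => by
        simpa [pow_succ, mul_assoc, mul_comm, mul_left_comm] using hF (k + 1) (by omega)
    refine hA.indicator_const_mem_of_subset_of_le ?_ hc le_rfl
      (hconv.union_indicator_const_mem hA hc (by simpa using hF 0 (by omega)) htail)
    rintro ω hω
    obtain ⟨_ | k, hk, hωk⟩ := Set.mem_iUnion₂.1 hω
    · exact .inl hωk
    · exact .inr (Set.mem_iUnion₂.2 ⟨k, by omega, hωk⟩)

end SolidConvex

theorem TightPos.radiallyBoundedPos {P : Measure Ω} {A : Set (Ω → ℝ)} (ht : TightPos P A) :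
    RadiallyBoundedPos P A := by
  intro X _ hX0
  obtain ⟨n, hn⟩ : ∃ n : ℕ, P {ω | 1 / ((n : ℝ) + 1) < X ω} ≠ 0 := by
    by_contra! h
    refine hX0 (measure_mono_null (fun ω hω => ?_) (measure_iUnion_null h))
    exact Set.mem_iUnion.2 (exists_nat_one_div_lt (show 0 < X ω from hω))
  obtain ⟨ε, -, hε, hεn⟩ := ENNReal.lt_iff_exists_real_btwn.1 (pos_iff_ne_zero.2 hn)
  obtain ⟨M, hM, hMA⟩ := ht ε (ENNReal.ofReal_pos.1 hε)
  refine ⟨M * (n + 1), by positivity, fun l hl hlA => (hMA _ hlA).not_ge ?_⟩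
  refine hεn.le.trans (measure_mono fun ω (hω : 1 / ((n : ℝ) + 1) < X ω) => ?_)
  change M < l * X ω
  rw [div_lt_iff₀ (by positivity)] at hω
  have hXω : 0 < X ω := pos_of_mul_pos_left (one_pos.trans hω) (by positivity)
  calc M < M * (n + 1) * X ω := by nlinarith
    _ < l * X ω := mul_lt_mul_of_pos_right hl hXω

theorem RadiallyBoundedPos.tightPos {P : Measure Ω} [IsFiniteMeasure P] {A : Set (Ω → ℝ)}
    (hL0 : ∀ X ∈ A, AEMeasurable X P) (hpos : ∀ X ∈ A, ∀ᵐ ω ∂P, 0 ≤ X ω)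
    (hconv : Convex ℝ A) (hsolid : Solid P A) (hrb : RadiallyBoundedPos P A) :
    TightPos P A := by
  by_contra hnt
  obtain ⟨ε, hε, hlarge⟩ : ∃ ε > (0 : ℝ), ∀ M > (0 : ℝ), ∃ X ∈ A,
      ENNReal.ofReal ε ≤ P {ω | M < X ω} := by
    simpa [TightPos] using hnt
  have hlevel : ∀ m : ℕ, ∃ F, MeasurableSet F ∧ ENNReal.ofReal ε ≤ P F ∧
      F.indicator (fun _ => (4 : ℝ) ^ (m + 1)) ∈ A := by
    intro m
    obtain ⟨X, hX, hXε⟩ := hlarge ((4 : ℝ) ^ (m + 1)) (by positivity)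
    obtain ⟨F, hF, hFX, hFA⟩ := hsolid.exists_measurableSet_indicator_const_mem hX (hL0 X hX)
      (hpos X hX) (by positivity : (0 : ℝ) ≤ 4 ^ (m + 1))
    exact ⟨F, hF, hFX ▸ hXε, hFA⟩
  choose F hF hFε hFA using hlevel
  obtain ⟨D, hD0, hDF⟩ :=
    exists_measure_ne_zero_forall_exists_subset_biUnion hF (ENNReal.ofReal_pos.2 hε).ne' hFε
  have hDA : ∀ N : ℕ, D.indicator (fun _ => (2 : ℝ) ^ N) ∈ A := by
    intro N
    obtain ⟨K, hK⟩ := hDF N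
    refine hsolid.indicator_const_mem_of_subset_of_le hK (by positivity) le_rfl
      (hconv.biUnion_indicator_const_mem hsolid K (by positivity) fun k _ =>
        hsolid.indicator_const_mem_of_subset_of_le subset_rfl (by positivity) ?_ (hFA (N + k)))
    calc (2 : ℝ) ^ (k + 1) * 2 ^ N = 2 ^ (N + k + 1) := by ring
      _ ≤ 4 ^ (N + k + 1) := pow_le_pow_left₀ (by norm_num) (by norm_num) _
  have hscale : ∀ l : ℝ,
      (fun ω => l * D.indicator (fun _ => (1 : ℝ)) ω) = D.indicator fun _ => l :=
    fun l => funext fun ω => by by_cases hω : ω ∈ D <;> simp [hω]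
  have hsupp : {ω | 0 < D.indicator (fun _ => (1 : ℝ)) ω} = D := by
    ext ω
    by_cases hω : ω ∈ D <;> simp [hω]
  obtain ⟨Λ, -, hΛ⟩ := hrb (D.indicator fun _ => 1) (by simpa using hDA 0) (by rwa [hsupp])
  obtain ⟨N, hN⟩ := pow_unbounded_of_one_lt Λ one_lt_two
  exact hΛ _ hN (by rw [hscale]; exact hDA N)

/-- A convex solid set `A ⊆ L⁰₊` is tight iff it is radially bounded. -/
theorem stmt2 (P : Measure Ω) [IsProbabilityMeasure P] (A : Set (Ω → ℝ))
    (hL0 : ∀ X ∈ A, AEMeasurable X P) (hpos : ∀ X ∈ A, ∀ᵐ ω ∂P, 0 ≤ X ω)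
    (hconv : Convex ℝ A) (hsolid : Solid P A) :
    TightPos P A ↔ RadiallyBoundedPos P A :=
  ⟨TightPos.radiallyBoundedPos, RadiallyBoundedPos.tightPos hL0 hpos hconv hsolid⟩
end

section
/- If A ⊆ L⁰₊ is convex, solid, and closed in probability, and there exist ε > 0 and a sequence (X_n) ⊆ A with P(X_n > 2^n) > ε for all n, then setting E_n = {X_n > 2^n} and E = limsup E_n = ⋂_m ⋃_{n≥m} E_n, one has m·1_E ∈ A for every natural number m, and P(E) ≥ ε. -/
/-!
Solidity puts `2ⁿ·1_{Eₙ} ≤ Xₙ` in `A`. Since `2ᵏ·1_{E ∪ F} ≤ ½·2ᵃ·1_E + ½·2ᵃ·1_F` for `k < a`,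
induction on finite sets of indices `> k` (inserting the least one) and convexity put
`2ᵏ·1_{⋃_{n ∈ s} Eₙ}` in `A`; these increase to `2ᵏ·1_{⋃_{n > k} Eₙ}`, which lies in `A` by
closedness, and dominates `m·1_E` for `k = m`. The bound on `P(E)` is continuity from above.
-/

open MeasureTheory Filter

variable {Ω : Type*} [MeasurableSpace Ω]

open Set

theorem indicator_union_const_le_midpoint {α : Type*} {s t : Set α} {c d : ℝ} (hc : 0 ≤ c)
    (hcd : 2 * c ≤ d) :
    (s ∪ t).indicator (fun _ => c) ≤
      (1 / 2 : ℝ) • s.indicator (fun _ => d) + (1 / 2 : ℝ) • t.indicator (fun _ => d) := by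
  classical
  intro ω
  simp only [Pi.add_apply, Pi.smul_apply, smul_eq_mul, indicator_apply, mem_union]
  split_ifs <;> first | tauto | linarith

theorem le_measure_limsup_of_forall_le {μ : Measure Ω} [IsFiniteMeasure μ] {s : ℕ → Set Ω}
    (hs : ∀ n, MeasurableSet (s n)) {c : ENNReal} (hc : ∀ n, c ≤ μ (s n)) :
    c ≤ μ (⋂ k, ⋃ n, ⋃ (_ : k ≤ n), s n) := by
  have htail : Antitone fun k => ⋃ n, ⋃ (_ : k ≤ n), s n := fun i j hij =>
    iUnion₂_mono' fun n hn => ⟨n, hij.trans hn, subset_rfl⟩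
  refine ge_of_tendsto (tendsto_measure_iInter_atTop
    (fun k => (MeasurableSet.biUnion (to_countable _) fun n _ => hs n).nullMeasurableSet)
    htail ⟨0, measure_ne_top μ _⟩) (Eventually.of_forall fun k => ?_)
  exact (hc k).trans (measure_mono (subset_iUnion₂ (s := fun n (_ : k ≤ n) => s n) k le_rfl))

section

variable {P : Measure Ω} {A : Set (Ω → ℝ)}

theorem Solid.mem_of_le (hA : Solid P A) {X Y : Ω → ℝ} (hX : X ∈ A) (hY₀ : 0 ≤ Y)
    (hYX : Y ≤ X) : Y ∈ A :=
  hA X hX Y (ae_of_all _ fun ω => ⟨hY₀ ω, hYX ω⟩)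

theorem Solid.zero_mem (hA : Solid P A) {X : Ω → ℝ} (hX : X ∈ A) (hX₀ : ∀ᵐ ω ∂P, 0 ≤ X ω) :
    (0 : Ω → ℝ) ∈ A :=
  hA X hX 0 (hX₀.mono fun _ h => ⟨le_rfl, h⟩)

theorem Solid.indicator_lt_mem (hA : Solid P A) {X : Ω → ℝ} (hX : X ∈ A)
    (hX₀ : ∀ᵐ ω ∂P, 0 ≤ X ω) {c : ℝ} (hc : 0 ≤ c) :
    {ω | c < X ω}.indicator (fun _ => c) ∈ A := by
  classical
  refine hA X hX _ (hX₀.mono fun ω hω => ⟨indicator_nonneg (fun _ _ => hc) ω, ?_⟩)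
  simp only [indicator_apply]
  split_ifs with h
  exacts [h.le, hω]

theorem Convex.indicator_biUnion_pow_two_mem (hconv : Convex ℝ A) (hsolid : Solid P A)
    (h0 : (0 : Ω → ℝ) ∈ A) {S : ℕ → Set Ω}
    (hS : ∀ n, (S n).indicator (fun _ => (2 : ℝ) ^ n) ∈ A) (s : Finset ℕ) :
    ∀ k, (∀ n ∈ s, k < n) → (⋃ n ∈ s, S n).indicator (fun _ => (2 : ℝ) ^ k) ∈ A := by
  classical
  induction s using Finset.induction_on_min with
  | empty =>
    intro k _
    simp only [Finset.notMem_empty, iUnion_of_empty, iUnion_empty, indicator_empty]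
    exact h0
  | insert a s has ih =>
    intro k hk
    have hka : k < a := hk a (Finset.mem_insert_self a s)
    rw [Finset.set_biUnion_insert]
    refine hsolid.mem_of_le (hconv (hS a) (ih a has) (by norm_num) (by norm_num) (by norm_num))
      (indicator_nonneg fun _ _ => by positivity)
      (indicator_union_const_le_midpoint (by positivity) ?_)
    calc 2 * (2 : ℝ) ^ k = 2 ^ (k + 1) := by ring
      _ ≤ 2 ^ a := pow_le_pow_right₀ (by norm_num) hka

theorem indicator_iUnion_mem_of_monotone [IsFiniteMeasure P]
    (hclosed : ∀ X, InClosure P A X → X ∈ A) {V : ℕ → Set Ω} (hVm : ∀ j, MeasurableSet (V j))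
    (hV : Monotone V) {c : ℝ} (hA : ∀ j, (V j).indicator (fun _ => c) ∈ A) :
    (⋃ j, V j).indicator (fun _ => c) ∈ A :=
  hclosed _ ⟨_, hA, tendstoInMeasure_of_tendsto_ae
    (fun j => (measurable_const.indicator (hVm j)).aestronglyMeasurable)
    (ae_of_all _ fun ω => (hV.tendsto_indicator _ _ ω).mono_right (pure_le_nhds _))⟩

theorem Convex.indicator_tail_pow_two_mem [IsFiniteMeasure P] (hconv : Convex ℝ A)
    (hsolid : Solid P A) (hclosed : ∀ X, InClosure P A X → X ∈ A) (h0 : (0 : Ω → ℝ) ∈ A)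
    {S : ℕ → Set Ω} (hSm : ∀ n, MeasurableSet (S n))
    (hS : ∀ n, (S n).indicator (fun _ => (2 : ℝ) ^ n) ∈ A) (k : ℕ) :
    (⋃ n, ⋃ (_ : k < n), S n).indicator (fun _ => (2 : ℝ) ^ k) ∈ A := by
  have htail : ⋃ n, ⋃ (_ : k < n), S n = ⋃ j, ⋃ n ∈ Finset.Ioo k j, S n := by
    ext ω
    simp only [mem_iUnion, Finset.mem_Ioo, exists_prop]
    constructor
    · rintro ⟨n, hkn, hω⟩
      exact ⟨n + 1, n, ⟨hkn, n.lt_succ_self⟩, hω⟩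
    · rintro ⟨_, n, ⟨hkn, _⟩, hω⟩
      exact ⟨n, hkn, hω⟩
  rw [htail]
  exact indicator_iUnion_mem_of_monotone hclosed
    (fun j => Finset.measurableSet_biUnion _ fun n _ => hSm n)
    (fun i j hij => iUnion₂_mono' fun n hn => ⟨n, Finset.Ioo_subset_Ioo_right hij hn, subset_rfl⟩)
    fun j => hconv.indicator_biUnion_pow_two_mem hsolid h0 hS _ k
      fun n hn => (Finset.mem_Ioo.1 hn).1

end

theorem stmt6_general (P : Measure Ω) [IsProbabilityMeasure P] (A : Set (Ω → ℝ))
    (hpos : ∀ X ∈ A, ∀ᵐ ω ∂P, 0 ≤ X ω)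
    (hconv : Convex ℝ A) (hsolid : Solid P A)
    (hclosed : ∀ X : Ω → ℝ, InClosure P A X → X ∈ A)
    (ε : ℝ) (X : ℕ → Ω → ℝ) (hX : ∀ n, X n ∈ A) (hXm : ∀ n, Measurable (X n))
    (hbig : ∀ n : ℕ, ENNReal.ofReal ε < P {ω | (2 : ℝ) ^ n < X n ω}) :
    (∀ m : ℕ,
        Set.indicator (⋂ m', ⋃ n, ⋃ (_ : m' ≤ n), {ω | (2 : ℝ) ^ n < X n ω})
          (fun _ => (m : ℝ)) ∈ A) ∧
      ENNReal.ofReal ε ≤ P (⋂ m', ⋃ n, ⋃ (_ : m' ≤ n), {ω | (2 : ℝ) ^ n < X n ω}) := by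
  set S : ℕ → Set Ω := fun n => {ω | (2 : ℝ) ^ n < X n ω}
  have hSm : ∀ n, MeasurableSet (S n) := fun n => measurableSet_lt measurable_const (hXm n)
  have h0 : (0 : Ω → ℝ) ∈ A := hsolid.zero_mem (hX 0) (hpos _ (hX 0))
  have hS : ∀ n, (S n).indicator (fun _ => (2 : ℝ) ^ n) ∈ A := fun n =>
    hsolid.indicator_lt_mem (hX n) (hpos _ (hX n)) (by positivity)
  refine ⟨fun m => ?_, le_measure_limsup_of_forall_le hSm fun n => (hbig n).le⟩
  refine hsolid.mem_of_le (hconv.indicator_tail_pow_two_mem hsolid hclosed h0 hSm hS m)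
    (indicator_nonneg fun _ _ => m.cast_nonneg) ?_
  calc _ ≤ (⋃ n, ⋃ (_ : m < n), S n).indicator (fun _ => (m : ℝ)) :=
        indicator_le_indicator_of_subset (iInter_subset _ (m + 1)) (fun _ => m.cast_nonneg)
    _ ≤ _ := indicator_mono fun _ => show (m : ℝ) ≤ 2 ^ m by exact_mod_cast m.lt_two_pow_self.le

/-- If `A ⊆ L⁰₊` is convex, solid and closed in probability, and `P(Xₙ > 2ⁿ) > ε` for a
sequence `(Xₙ) ⊆ A`, then with `E = limsup {Xₙ > 2ⁿ}` one has `m·1_E ∈ A` for every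
`m ∈ ℕ`, and `P(E) ≥ ε`. -/
theorem stmt6 (P : Measure Ω) [IsProbabilityMeasure P] (A : Set (Ω → ℝ))
    (hL0 : ∀ X ∈ A, AEMeasurable X P) (hpos : ∀ X ∈ A, ∀ᵐ ω ∂P, 0 ≤ X ω)
    (hconv : Convex ℝ A) (hsolid : Solid P A)
    (hclosed : ∀ X : Ω → ℝ, InClosure P A X → X ∈ A)
    (ε : ℝ) (hε : 0 < ε) (X : ℕ → Ω → ℝ) (hX : ∀ n, X n ∈ A) (hXm : ∀ n, Measurable (X n))
    (hbig : ∀ n : ℕ, ENNReal.ofReal ε < P {ω | (2 : ℝ) ^ n < X n ω}) :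
    (∀ m : ℕ,
        Set.indicator (⋂ m', ⋃ n, ⋃ (_ : m' ≤ n), {ω | (2 : ℝ) ^ n < X n ω})
          (fun _ => (m : ℝ)) ∈ A) ∧
      ENNReal.ofReal ε ≤ P (⋂ m', ⋃ n, ⋃ (_ : m' ≤ n), {ω | (2 : ℝ) ^ n < X n ω}) :=
  stmt6_general P A hpos hconv hsolid hclosed ε X hX hXm hbig
end

section
/- If (Ω, F, P) is purely atomic and A ⊆ L⁰₊ is solid, then A is tight if and only if it is radially bounded (convexity is not needed). -/
open MeasureTheory Filter

variable {Ω : Type*} [MeasurableSpace Ω]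

/-- `B` is an atom of the probability space `(Ω, P)`. -/
def IsProbAtom (P : Measure Ω) (B : Set Ω) : Prop :=
  MeasurableSet B ∧ P B ≠ 0 ∧
    ∀ E : Set Ω, MeasurableSet E → E ⊆ B → P E = 0 ∨ P E = P B

/-- The probability space is purely atomic. -/
def PurelyAtomic (P : Measure Ω) : Prop :=
  ∀ E : Set Ω, MeasurableSet E → P E ≠ 0 → ∃ B ⊆ E, IsProbAtom P B

/-!
Tightness always implies radial boundedness: if `P {δ < X} > 0`, tightness at level
`P {δ < X}` bounds every ray `l • X` staying in `A` by `l ≤ M / δ`.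

Conversely, if `A` is not tight there are `Xₙ ∈ A` with `P {n + 1 < Xₙ} ≥ ε`, so the
`limsup` of these sets has measure `≥ ε` and contains an atom `B`. Being an atom, `B` lies
almost surely inside `{n + 1 < Xₙ}` for infinitely many `n`, hence by solidity
`(n + 1) • 1_B ∈ A` for infinitely many `n`: the ray through `1_B ∈ A` never leaves `A`.
-/

open MeasureTheory Filter Set

variable {P : Measure Ω} {A : Set (Ω → ℝ)}

theorem exists_pos_measure_lt_ne_zero {X : Ω → ℝ} (hX : P {ω | 0 < X ω} ≠ 0) :
    ∃ δ > (0 : ℝ), P {ω | δ < X ω} ≠ 0 := by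
  by_contra! h
  refine hX (measure_mono_null (fun ω hω => ?_)
    (measure_iUnion_null fun n : ℕ => h (1 / (n + 1)) Nat.one_div_pos_of_nat))
  obtain ⟨n, hn⟩ := exists_nat_one_div_lt (show 0 < X ω from hω)
  exact mem_iUnion.2 ⟨n, hn⟩

theorem radiallyBoundedPos_of_tightPos [IsFiniteMeasure P] (ht : TightPos P A) :
    RadiallyBoundedPos P A := by
  intro X _ hX0
  obtain ⟨δ, hδ, hXδ⟩ := exists_pos_measure_lt_ne_zero hX0
  set c := P {ω | δ < X ω}
  obtain ⟨M, hM, hMt⟩ := ht c.toReal (ENNReal.toReal_pos hXδ (measure_ne_top P _))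
  refine ⟨M / δ, div_pos hM hδ, fun l hl hmem => ?_⟩
  have hl0 : 0 < l := (div_pos hM hδ).trans hl
  have hsub : {ω | δ < X ω} ⊆ {ω | M < l * X ω} := fun ω hω =>
    ((div_lt_iff₀ hδ).mp hl).trans (mul_lt_mul_of_pos_left hω hl0)
  have hlt := (measure_mono hsub).trans_lt (hMt _ hmem)
  rw [ENNReal.ofReal_toReal (measure_ne_top P _)] at hlt
  exact hlt.false

theorem le_measure_limsup_atTop [IsFiniteMeasure P] {E : ℕ → Set Ω} {ε : ENNReal}
    (hE : ∀ n, MeasurableSet (E n)) (hεE : ∀ n, ε ≤ P (E n)) :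
    ε ≤ P (limsup E atTop) := by
  have hanti : Antitone fun n => ⋃ i ≥ n, E i := fun m n hmn =>
    biUnion_mono (fun i (hi : n ≤ i) => hmn.trans hi) fun _ _ => subset_rfl
  rw [limsup_eq_iInf_iSup_of_nat]
  simp only [iSup_eq_iUnion, iInf_eq_iInter]
  have hmeas : ∀ n, NullMeasurableSet (⋃ i ≥ n, E i) P := fun n =>
    (MeasurableSet.biUnion (to_countable _) fun i _ => hE i).nullMeasurableSet
  rw [hanti.measure_iInter hmeas ⟨0, measure_ne_top P _⟩]
  exact le_iInf fun n => (hεE n).trans (measure_mono (subset_iUnion₂_of_subset n le_rfl le_rfl))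

theorem IsProbAtom.measure_diff_eq_zero [IsFiniteMeasure P] {B E : Set Ω} (hB : IsProbAtom P B)
    (hE : MeasurableSet E) (hBE : P (E ∩ B) ≠ 0) : P (B \ E) = 0 := by
  have hfull := (hB.2.2 _ (hE.inter hB.1) inter_subset_right).resolve_left hBE
  rw [← sdiff_inter_self_eq_sdiff, measure_sdiff inter_subset_right
    (hE.inter hB.1).nullMeasurableSet (measure_ne_top P _), hfull, tsub_self]

theorem IsProbAtom.frequently_measure_diff_eq_zero [IsFiniteMeasure P] {B : Set Ω}
    {E : ℕ → Set Ω} (hB : IsProbAtom P B) (hE : ∀ n, MeasurableSet (E n))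
    (hBE : B ⊆ limsup E atTop) : ∃ᶠ n in atTop, P (B \ E n) = 0 := by
  by_contra hfreq
  obtain ⟨N, hN⟩ := eventually_atTop.1 (not_frequently.1 hfreq)
  have hnull : ∀ n ≥ N, P (E n ∩ B) = 0 := fun n hn => by
    by_contra h
    exact hN n hn (hB.measure_diff_eq_zero (hE n) h)
  refine hB.2.1 (measure_mono_null (fun ω hω => ?_)
    ((measure_biUnion_null_iff (to_countable {n | N ≤ n})).2 hnull))
  obtain ⟨n, hn, hωn⟩ := (mem_limsup_iff_frequently_mem.1 (hBE hω)).forall_exists_of_atTop N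
  exact mem_biUnion hn ⟨hωn, hω⟩

theorem PurelyAtomic.exists_atom_frequently_measure_diff_eq_zero [IsFiniteMeasure P]
    (hP : PurelyAtomic P) {E : ℕ → Set Ω} {ε : ENNReal} (hε : ε ≠ 0)
    (hE : ∀ n, MeasurableSet (E n)) (hεE : ∀ n, ε ≤ P (E n)) :
    ∃ B, IsProbAtom P B ∧ ∃ᶠ n in atTop, P (B \ E n) = 0 := by
  obtain ⟨B, hBE, hB⟩ := hP _ (MeasurableSet.measurableSet_limsup hE)
    (ne_bot_of_le_ne_bot hε (le_measure_limsup_atTop hE hεE))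
  exact ⟨B, hB, hB.frequently_measure_diff_eq_zero hE hBE⟩

theorem Solid.mul_indicator_mem (hA : Solid P A) {X : Ω → ℝ} (hX : X ∈ A)
    (hX0 : ∀ᵐ ω ∂P, 0 ≤ X ω) {B : Set Ω} {c r : ℝ} (hBX : P (B \ {ω | c < X ω}) = 0)
    (hr : 0 ≤ r) (hrc : r ≤ c) : (fun ω => r * B.indicator 1 ω) ∈ A := by
  refine hA X hX _ ?_
  filter_upwards [hX0, measure_eq_zero_iff_ae_notMem.1 hBX] with ω hω hωB
  by_cases hB : ω ∈ B
  · have : c < X ω := not_not.1 fun h => hωB ⟨hB, h⟩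
    simp only [indicator_of_mem hB, Pi.one_apply, mul_one]
    exact ⟨hr, by linarith⟩
  · simp only [indicator_of_notMem hB, mul_zero]
    exact ⟨le_rfl, hω⟩

theorem Solid.not_radiallyBoundedPos (hA : Solid P A) {X : ℕ → Ω → ℝ}
    (hXA : ∀ n, X n ∈ A) (hX0 : ∀ n, ∀ᵐ ω ∂P, 0 ≤ X n ω) {B : Set Ω} (hB : P B ≠ 0)
    (hfreq : ∃ᶠ n : ℕ in atTop, P (B \ {ω | (n + 1 : ℝ) < X n ω}) = 0) :
    ¬RadiallyBoundedPos P A := by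
  intro hrb
  obtain ⟨n₀, hn₀⟩ := hfreq.exists
  have hBA : B.indicator (1 : Ω → ℝ) ∈ A := by
    simpa using hA.mul_indicator_mem (hXA n₀) (hX0 n₀) hn₀ zero_le_one
      (by linarith [n₀.cast_nonneg (α := ℝ)])
  have hsupp : {ω | 0 < B.indicator (1 : Ω → ℝ) ω} = B := by
    ext ω
    by_cases hω : ω ∈ B <;> simp [hω]
  obtain ⟨Λ, -, hΛ⟩ := hrb _ hBA (by rwa [hsupp])
  obtain ⟨n, hn, hnB⟩ := hfreq.forall_exists_of_atTop ⌈Λ⌉₊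
  refine hΛ (n + 1) ?_ (hA.mul_indicator_mem (hXA n) (hX0 n) hnB (by positivity) le_rfl)
  linarith [Nat.le_ceil Λ, (Nat.cast_le (α := ℝ)).2 hn]

theorem tightPos_of_radiallyBoundedPos [IsFiniteMeasure P] (hP : PurelyAtomic P)
    (hL0 : ∀ X ∈ A, AEMeasurable X P) (hpos : ∀ X ∈ A, ∀ᵐ ω ∂P, 0 ≤ X ω) (hA : Solid P A)
    (hrb : RadiallyBoundedPos P A) : TightPos P A := by
  by_contra hnt
  obtain ⟨ε, hε, hbig⟩ : ∃ ε > (0 : ℝ), ∀ n : ℕ, ∃ X ∈ A,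
      ENNReal.ofReal ε ≤ P {ω | (n + 1 : ℝ) < X ω} := by
    simp only [TightPos] at hnt
    push Not at hnt
    obtain ⟨ε, hε, h⟩ := hnt
    exact ⟨ε, hε, fun n => h _ (by positivity)⟩
  choose X hXA hX using hbig
  -- atoms only test measurable sets, so pass to measurable kernels of the level sets
  choose E hEX hE hEeq using fun n =>
    (nullMeasurableSet_lt aemeasurable_const (hL0 _ (hXA n))).exists_measurable_subset_ae_eq
  obtain ⟨B, hB, hfreq⟩ := hP.exists_atom_frequently_measure_diff_eq_zero
    (ENNReal.ofReal_pos.2 hε).ne' hE fun n => (hX n).trans_eq (measure_congr (hEeq n)).symm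
  refine hA.not_radiallyBoundedPos hXA (fun n => hpos _ (hXA n)) hB.2.1 ?_ hrb
  exact hfreq.mono fun n hn => measure_mono_null (sdiff_subset_sdiff_right (hEX n)) hn

/-- On a purely atomic probability space, a solid set `A ⊆ L⁰₊` is tight iff it is
radially bounded. -/
theorem stmt8 (P : Measure Ω) [IsProbabilityMeasure P] (hPA : PurelyAtomic P)
    (A : Set (Ω → ℝ)) (hL0 : ∀ X ∈ A, AEMeasurable X P)
    (hpos : ∀ X ∈ A, ∀ᵐ ω ∂P, 0 ≤ X ω) (hsolid : Solid P A) :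
    TightPos P A ↔ RadiallyBoundedPos P A :=
  ⟨radiallyBoundedPos_of_tightPos, tightPos_of_radiallyBoundedPos hPA hL0 hpos hsolid⟩
end

section
/- On an atomless probability space, if (X_n) is a sequence of independent random variables each taking values 0 and 1 with probability 1/2, then the set A = {X ∈ L⁰₊ : ∃ n, X ≤ n·X_n a.e.} is solid and radially bounded but not tight. -/
/-!
Solidity is immediate. For radial boundedness, fix `Z ∈ A` with `P {Z > δ} > 0`. If `l • Z ≤ m • Xₘ`
a.e. then `Xₘ = 1` a.e. on `{Z > δ}` and `m > l δ`; but by independence, a set of positive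
probability lies a.e. inside `{Xₘ = 1}` for only finitely many `m`, since it would otherwise have
probability at most `2⁻ʲ` for every `j`. So `l` is bounded. Tightness fails because
`n • Xₙ ∈ A` equals `n` with probability `1/2`.
-/

open MeasureTheory Filter

variable {Ω : Type*} [MeasurableSpace Ω]

/-- The set of positive random variables dominated by `n·Xₙ` for some `n`. -/
def dominatedSet (P : Measure Ω) (X : ℕ → Ω → ℝ) : Set (Ω → ℝ) :=
  {Y | (∀ᵐ ω ∂P, 0 ≤ Y ω) ∧ ∃ n : ℕ, ∀ᵐ ω ∂P, Y ω ≤ (n : ℝ) * X n ω}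

open ProbabilityTheory
open scoped ENNReal

section General

variable {P : Measure Ω}

theorem ProbabilityTheory.iIndepFun.finite_setOf_ae_le_preimage {ι β : Type*}
    [MeasurableSpace β] {Y : ι → Ω → β} (hY : iIndepFun Y P) {T : Set β}
    (hT : MeasurableSet T) {q : ℝ≥0∞} (hq : q < 1) (hYT : ∀ i, P (Y i ⁻¹' T) ≤ q)
    {S : Set Ω} (hS : P S ≠ 0) : {i | S ≤ᵐ[P] Y i ⁻¹' T}.Finite := by
  by_contra hinf
  have hle_pow : ∀ j : ℕ, P S ≤ q ^ j := fun j ↦ by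
    obtain ⟨t, hts, rfl⟩ := Set.Infinite.exists_subset_card_eq hinf j
    calc P S ≤ P (⋂ i ∈ t, Y i ⁻¹' T) := by
          have hSt : ∀ᵐ ω ∂P, ∀ i ∈ t, ω ∈ S → ω ∈ Y i ⁻¹' T :=
            (eventually_all_finset t).2 fun i hi ↦ hts hi
          exact measure_mono_ae <| hSt.mono fun ω h hω ↦ Set.mem_iInter₂.2 fun i hi ↦ h i hi hω
      _ = ∏ i ∈ t, P (Y i ⁻¹' T) := hY.measure_inter_preimage_eq_mul t fun _ _ ↦ hT
      _ ≤ q ^ t.card := Finset.prod_le_pow_card _ _ _ fun i _ ↦ hYT i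
  exact hS <| le_antisymm
    (ge_of_tendsto' (ENNReal.tendsto_pow_atTop_nhds_zero_of_lt_one hq) hle_pow) bot_le

theorem ae_eq_zero_or_eq_one_of_measure_add_eq_one [IsProbabilityMeasure P] {f : Ω → ℝ}
    (hf : Measurable f) (h : P {ω | f ω = 0} + P {ω | f ω = 1} = 1) :
    ∀ᵐ ω ∂P, f ω = 0 ∨ f ω = 1 := by
  have hdisj : Disjoint {ω | f ω = 0} {ω | f ω = 1} :=
    Set.disjoint_left.2 fun ω h0 h1 ↦ by simp_all
  have hunion : P ({ω | f ω = 0} ∪ {ω | f ω = 1}) = 1 := by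
    rw [measure_union hdisj (hf (measurableSet_singleton 1)), h]
  exact (ae_mem_iff_measure_eq ((hf (measurableSet_singleton 0)).union
    (hf (measurableSet_singleton 1))).nullMeasurableSet).2 (hunion.trans measure_univ.symm)

theorem exists_pos_measure_setOf_lt_ne_zero {Z : Ω → ℝ} (hZ : P {ω | 0 < Z ω} ≠ 0) :
    ∃ δ > (0 : ℝ), P {ω | δ < Z ω} ≠ 0 := by
  by_contra! h
  refine hZ (measure_mono_null (fun ω hω ↦ ?_) (measure_iUnion_null fun k : ℕ ↦
    h (1 / ((k : ℝ) + 1)) Nat.one_div_pos_of_nat))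
  exact Set.mem_iUnion.2 (exists_nat_one_div_lt (show 0 < Z ω from hω))

theorem exists_mem_of_ae_imp {S : Set Ω} {p : Ω → Prop} (hS : P S ≠ 0)
    (h : ∀ᵐ ω ∂P, ω ∈ S → p ω) : ∃ ω ∈ S, p ω := by
  by_contra! hne
  exact hS (measure_mono_null (fun ω hω (hp : ω ∈ S → p ω) ↦ hne ω hω (hp hω)) (ae_iff.1 h))

end General

section DominatedSet

variable {P : Measure Ω} {X : ℕ → Ω → ℝ}

theorem solid_dominatedSet : Solid P (dominatedSet P X) := by
  rintro Z ⟨-, n, hZn⟩ Y hY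
  exact ⟨hY.mono fun ω h ↦ h.1, n, (hY.and hZn).mono fun ω h ↦ h.1.2.trans h.2⟩

theorem not_tightPos_dominatedSet {c : ℝ} (hc : 0 < c) (hX : ∀ n, 0 ≤ᵐ[P] X n)
    (h1 : ∀ n, ENNReal.ofReal c ≤ P {ω | X n ω = 1}) : ¬ TightPos P (dominatedSet P X) := by
  intro htight
  obtain ⟨M, -, hM⟩ := htight c hc
  obtain ⟨n, hn⟩ := exists_nat_gt M
  have hmem : (fun ω ↦ (n : ℝ) * X n ω) ∈ dominatedSet P X :=
    ⟨(hX n).mono fun ω h ↦ mul_nonneg n.cast_nonneg h, n, ae_of_all _ fun ω ↦ le_rfl⟩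
  refine (hM _ hmem).not_ge ((h1 n).trans (measure_mono fun ω (h : X n ω = 1) ↦ ?_))
  simpa [h] using hn

theorem ae_eq_one_and_lt_of_mul_le {Z f : Ω → ℝ} {c l δ : ℝ} (hl : 0 < l) (hδ : 0 ≤ δ)
    (hf : ∀ᵐ ω ∂P, f ω = 0 ∨ f ω = 1) (hle : ∀ᵐ ω ∂P, l * Z ω ≤ c * f ω) :
    ∀ᵐ ω ∂P, δ < Z ω → f ω = 1 ∧ l * δ < c := by
  filter_upwards [hf, hle] with ω hf hle hZ
  have hlZ : l * δ < l * Z ω := mul_lt_mul_of_pos_left hZ hl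
  rcases hf with h | h
  · rw [h, mul_zero] at hle
    nlinarith
  · rw [h, mul_one] at hle
    exact ⟨h, hlZ.trans_le hle⟩

theorem radiallyBoundedPos_dominatedSet (hindep : iIndepFun X P)
    (h01 : ∀ n, ∀ᵐ ω ∂P, X n ω = 0 ∨ X n ω = 1) {q : ℝ≥0∞} (hq : q < 1)
    (h1 : ∀ n, P {ω | X n ω = 1} ≤ q) : RadiallyBoundedPos P (dominatedSet P X) := by
  rintro Z - hZ
  obtain ⟨δ, hδ, hS⟩ := exists_pos_measure_setOf_lt_ne_zero hZ
  obtain ⟨B, hB⟩ := (hindep.finite_setOf_ae_le_preimage (measurableSet_singleton 1) hq h1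
    hS).bddAbove
  -- `B` bounds the indices `m` with `Xₘ = 1` a.e. on `{Z > δ}`,
  -- while `l • Z ≤ m • Xₘ` forces `l δ < m`.
  refine ⟨((B : ℝ) + 1) / δ, by positivity, ?_⟩
  rintro l hl ⟨-, m, hlm⟩
  have hl0 : 0 < l := (by positivity : (0 : ℝ) < (B + 1) / δ).trans hl
  have key := ae_eq_one_and_lt_of_mul_le hl0 hδ.le (h01 m) hlm
  have hmB : (m : ℝ) ≤ B := Nat.cast_le.2 (hB (key.mono fun ω h hω ↦ (h hω).1))
  obtain ⟨ω, hω, -, hlδ⟩ := exists_mem_of_ae_imp hS key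
  rw [div_lt_iff₀ hδ] at hl
  linarith

end DominatedSet

theorem stmt11_general (P : Measure Ω) [IsProbabilityMeasure P]
    (X : ℕ → Ω → ℝ) (hmeas : ∀ n, Measurable (X n))
    (hindep : ProbabilityTheory.iIndepFun X P)
    (h0 : ∀ n, P {ω | X n ω = 0} = 1 / 2) (h1 : ∀ n, P {ω | X n ω = 1} = 1 / 2) :
    Solid P (dominatedSet P X) ∧ RadiallyBoundedPos P (dominatedSet P X) ∧
      ¬ TightPos P (dominatedSet P X) := by
  have h01 : ∀ n, ∀ᵐ ω ∂P, X n ω = 0 ∨ X n ω = 1 := fun n ↦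
    ae_eq_zero_or_eq_one_of_measure_add_eq_one (hmeas n) (by rw [h0, h1, ENNReal.add_halves])
  refine ⟨solid_dominatedSet, ?_, ?_⟩
  · exact radiallyBoundedPos_dominatedSet hindep h01
      (ENNReal.half_lt_self one_ne_zero ENNReal.one_ne_top) fun n ↦ (h1 n).le
  · refine not_tightPos_dominatedSet one_half_pos (fun n ↦ (h01 n).mono fun ω h ↦ ?_) fun n ↦ ?_
    · rcases h with h | h <;> simp [h]
    · rw [h1 n, ENNReal.ofReal_div_of_pos two_pos]
      simp

/-- On an atomless probability space, if `(Xₙ)` are independent with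
`P(Xₙ = 0) = P(Xₙ = 1) = 1/2`, then `A = {Y ∈ L⁰₊ : ∃ n, Y ≤ n·Xₙ a.e.}` is solid and
radially bounded but not tight. -/
theorem stmt11 (P : Measure Ω) [IsProbabilityMeasure P]
    (hatomless : ∀ E : Set Ω, MeasurableSet E → P E ≠ 0 →
      ∃ F ⊆ E, MeasurableSet F ∧ P F ≠ 0 ∧ P F ≠ P E)
    (X : ℕ → Ω → ℝ) (hmeas : ∀ n, Measurable (X n))
    (hindep : ProbabilityTheory.iIndepFun X P)
    (h0 : ∀ n, P {ω | X n ω = 0} = 1 / 2) (h1 : ∀ n, P {ω | X n ω = 1} = 1 / 2) :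
    Solid P (dominatedSet P X) ∧ RadiallyBoundedPos P (dominatedSet P X) ∧
      ¬ TightPos P (dominatedSet P X) :=
  stmt11_general P X hmeas hindep h0 h1
end
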